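/- arXiv:2207.03629 — 4 statements merged into one kernel-verified Lean document; each statement's English description precedes it below -/
import Mathlib

section
/- Let X be a connected compact metric space and G a free semigroup action on X generated by finitely many continuous maps f_0,…,f_{m−1}. Then the following are equivalent: (1) G is chain recurrent; (2) G is chain transitive; (3) G is totally chain transitive; (4) G is chain mixing. -/
open Metric Filter Set
open scoped Classical

noncomputable section

variable {X : Type*} [MetricSpace X] {Y : Type*} [MetricSpace Y] {ι κ : Type*}

/-- `c` satisfies the `(w, δ)`-chain condition along the word `w`. -/
def IsChainSeq (f : ι → X → X) (w : List ι) (δ : ℝ) (c : ℕ → X) : Prop :=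
  ∀ (j : ℕ) (h : j < w.length), dist (f (w.get ⟨j, h⟩) (c j)) (c (j + 1)) ≤ δ

/-- There is a `(w, δ)`-chain from `a` to `b` with `|w| = n`. -/
def ChainFrom (f : ι → X → X) (δ : ℝ) (a b : X) (n : ℕ) : Prop :=
  ∃ w : List ι, w.length = n ∧ ∃ c : ℕ → X, IsChainSeq f w δ c ∧ c 0 = a ∧ c n = b

/-- `x` is a chain recurrent point of the action generated by `f`. -/
def ChainRecurrentPt (f : ι → X → X) (x : X) : Prop :=
  ∀ ε : ℝ, 0 < ε → ∃ n : ℕ, 0 < n ∧ ChainFrom f ε x x n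

/-- The action generated by `f` is chain recurrent. -/
def ChainRecurrent (f : ι → X → X) : Prop := ∀ x : X, ChainRecurrentPt f x

/-- The action generated by `f` is chain transitive. -/
def ChainTransitive (f : ι → X → X) : Prop :=
  ∀ ε : ℝ, 0 < ε → ∀ a b : X, ∃ n : ℕ, 0 < n ∧ ChainFrom f ε a b n

/-- The action generated by `f` is chain mixing. -/
def ChainMixing (f : ι → X → X) : Prop :=
  ∀ ε : ℝ, 0 < ε → ∃ N : ℕ, 0 < N ∧ ∀ a b : X, ∀ n : ℕ, N ≤ n → ChainFrom f ε a b n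

/-- The `ε`-chain recurrence time `r_ε(x, G)`. -/
def rTime (f : ι → X → X) (ε : ℝ) (x : X) : ℕ :=
  sInf {n : ℕ | 0 < n ∧ ChainFrom f ε x x n}

/-- `r_ε(G) = max_x r_ε(x, G)`. -/
def rTimeSup (f : ι → X → X) (ε : ℝ) : ℕ :=
  sSup (Set.range fun x : X => rTime f ε x)

/-- The chain mixing time `m_ε(x, δ, G)`. -/
def mTime (f : ι → X → X) (ε δ : ℝ) (x : X) : ℕ :=
  sInf {N : ℕ | ∀ n : ℕ, N ≤ n → ∀ y : X, ∃ z : X, dist z x < δ ∧ ChainFrom f ε z y n}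

/-- `m_ε(δ, G) = max_x m_ε(x, δ, G)`. -/
def mTimeSup (f : ι → X → X) (ε δ : ℝ) : ℕ :=
  sSup (Set.range fun x : X => mTime f ε δ x)

/-- `f_w = f_{i₀} ∘ f_{i₁} ∘ ⋯ ∘ f_{i_{k-1}}` applied to `x`. -/
def applyWord (f : ι → X → X) (w : List ι) (x : X) : X := w.foldr f x

/-- The generators of `G^k`, indexed by the words of length `k`. -/
def powerGens (f : ι → X → X) (k : ℕ) : (Fin k → ι) → X → X :=
  fun u => applyWord f (List.ofFn u)

/-- The generators `f_j × g_k` of the product action `G × H`. -/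
def prodGens (f : ι → X → X) (g : κ → Y → Y) : ι × κ → X × Y → X × Y :=
  fun p z => (f p.1 z.1, g p.2 z.2)

/-- `T_ε(x)`: the set of lengths of `(w, ε)`-chains from `x` to itself. -/
def Tset (f : ι → X → X) (ε : ℝ) (x : X) : Set ℕ :=
  {n : ℕ | 0 < n ∧ ChainFrom f ε x x n}

/-- `k = gcd T` for a set `T ⊆ ℕ`. -/
def IsGCDOf (T : Set ℕ) (k : ℕ) : Prop :=
  (∀ t ∈ T, k ∣ t) ∧ ∀ d : ℕ, (∀ t ∈ T, d ∣ t) → d ∣ k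

/-- `x ∼_ε y`: there is an `(w, ε)`-chain from `x` to `y` whose length is a multiple of `k`. -/
def RelEps (f : ι → X → X) (ε : ℝ) (k : ℕ) (x y : X) : Prop :=
  ∃ n : ℕ, 0 < n ∧ k ∣ n ∧ ChainFrom f ε x y n

/-- The orbit segment: the first `j` letters of `w` applied, in order, to `x`. -/
def orbitSeg (f : ι → X → X) (w : List ι) (x : X) (j : ℕ) : X :=
  (w.take j).foldl (fun y i => f i y) x

/-- The Bowen-type word metric `d_w`. -/
def wordDist (f : ι → X → X) (w : List ι) (x y : X) : ℝ :=
  ⨆ j : Fin (w.length + 1), dist (orbitSeg f w x (j : ℕ)) (orbitSeg f w y (j : ℕ))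

/-- `N(w, ε, G)`: maximal cardinality of a `(w, ε, G)`-separated subset of `X`. -/
def sepMax (f : ι → X → X) (w : List ι) (ε : ℝ) : ℕ :=
  sSup {k : ℕ | ∃ K : Finset X,
    (∀ x ∈ K, ∀ y ∈ K, x ≠ y → ε ≤ wordDist f w x y) ∧ K.card = k}

/-- Bufetov's topological entropy `h(G)` of a free semigroup action. -/
def topEntropy {m : ℕ} (f : Fin m → X → X) : ℝ :=
  ⨆ ε : {e : ℝ // 0 < e},
    Filter.limsup (fun n : ℕ =>
      Real.log ((∑ w : Fin n → Fin m, (sepMax f (List.ofFn w) ε.1 : ℝ)) / (m : ℝ) ^ n) / (n : ℝ))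
      Filter.atTop

/-- `N*(w, ε, δ, G)`: maximal cardinality of a `(w, ε, δ, G)`-pseudo-separated set. -/
def pseudoSepMax (f : ι → X → X) (w : List ι) (ε δ : ℝ) : ℕ :=
  sSup {k : ℕ | ∃ K : Finset (ℕ → X),
    (∀ c ∈ K, IsChainSeq f w δ c) ∧
    (∀ c ∈ K, ∀ c' ∈ K, c ≠ c' → ∃ j : ℕ, j < w.length ∧ ε < dist (c j) (c' j)) ∧
    K.card = k}

/-- `B*(w, ε, δ, G)`: minimal cardinality of a `(w, ε, δ, G)`-pseudo-spanning set. -/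
def pseudoSpanMin (f : ι → X → X) (w : List ι) (ε δ : ℝ) : ℕ :=
  sInf {k : ℕ | ∃ K : Finset (ℕ → X),
    (∀ c ∈ K, IsChainSeq f w δ c) ∧
    (∀ c : ℕ → X, IsChainSeq f w δ c →
      ∃ c' ∈ K, ∀ j : ℕ, j < w.length → dist (c j) (c' j) ≤ ε) ∧
    K.card = k}

/-- The pseudo-entropy `h*(G)` of a free semigroup action. -/
def pseudoEntropy {m : ℕ} (f : Fin m → X → X) : ℝ :=
  ⨆ ε : {e : ℝ // 0 < e}, ⨅ δ : {d : ℝ // 0 < d},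
    Filter.limsup (fun n : ℕ =>
      Real.log ((∑ w : Fin n → Fin m, (pseudoSepMax f (List.ofFn w) ε.1 δ.1 : ℝ)) / (m : ℝ) ^ n)
        / (n : ℝ)) Filter.atTop

/-- The metric `d'(ω, ω') = m^{-k}`, `k = inf {n | ωₙ ≠ ω'ₙ}`, on `Σ_m^+ = ℕ → Fin m`. -/
def sigmaDist (m : ℕ) (ω ω' : ℕ → Fin m) : ℝ :=
  if h : ∃ n : ℕ, ω n ≠ ω' n then (1 / (m : ℝ)) ^ Nat.find h else 0

/-- The metric `D = max {d', d}` on `Σ_m^+ × X`. -/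
def skewDist (m : ℕ) (p q : (ℕ → Fin m) × X) : ℝ :=
  max (sigmaDist m p.1 q.1) (dist p.2 q.2)

/-- The skew-product transformation `F(ω, x) = (σ ω, f_{ω 0} x)`. -/
def skewMap {m : ℕ} (f : Fin m → X → X) : (ℕ → Fin m) × X → (ℕ → Fin m) × X :=
  fun p => (fun n => p.1 (n + 1), f (p.1 0) p.2)

/-- `c` is a `δ`-pseudo-orbit of length `n + 1` of the single map `F`,
w.r.t. the distance function `D`. -/
def IsPseudoOrbit {Z : Type*} (D : Z → Z → ℝ) (F : Z → Z) (n : ℕ) (δ : ℝ) (c : ℕ → Z) : Prop :=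
  ∀ j : ℕ, j < n → D (F (c j)) (c (j + 1)) ≤ δ

/-- `N*(n, ε, δ, F)` for a single map `F` w.r.t. a distance function `D`. -/
def pseudoSepMaxMap {Z : Type*} (D : Z → Z → ℝ) (F : Z → Z) (n : ℕ) (ε δ : ℝ) : ℕ :=
  sSup {k : ℕ | ∃ K : Finset (ℕ → Z),
    (∀ c ∈ K, IsPseudoOrbit D F n δ c) ∧
    (∀ c ∈ K, ∀ c' ∈ K, c ≠ c' → ∃ j : ℕ, j < n ∧ ε < D (c j) (c' j)) ∧
    K.card = k}

/-- `B*(n, ε, δ, F)` for a single map `F` w.r.t. a distance function `D`. -/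
def pseudoSpanMinMap {Z : Type*} (D : Z → Z → ℝ) (F : Z → Z) (n : ℕ) (ε δ : ℝ) : ℕ :=
  sInf {k : ℕ | ∃ K : Finset (ℕ → Z),
    (∀ c ∈ K, IsPseudoOrbit D F n δ c) ∧
    (∀ c : ℕ → Z, IsPseudoOrbit D F n δ c →
      ∃ c' ∈ K, ∀ j : ℕ, j ≤ n → D (c j) (c' j) ≤ ε) ∧
    K.card = k}

/-- The pseudo-entropy `h*(F)` of a single map `F` w.r.t. a distance function `D`. -/
def pseudoEntropyMap {Z : Type*} (D : Z → Z → ℝ) (F : Z → Z) : ℝ :=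
  ⨆ ε : {e : ℝ // 0 < e}, ⨅ δ : {d : ℝ // 0 < d},
    Filter.limsup (fun n : ℕ =>
      Real.log (pseudoSepMaxMap D F n ε.1 δ.1 : ℝ) / (n : ℝ)) Filter.atTop

/-- An `ε`-chain of length `n` from `a` to `b` for a single map. -/
def ChainFromMap {Z : Type*} (D : Z → Z → ℝ) (F : Z → Z) (δ : ℝ) (a b : Z) (n : ℕ) : Prop :=
  ∃ c : ℕ → Z, IsPseudoOrbit D F n δ c ∧ c 0 = a ∧ c n = b

/-- `r_ε(z, F)` for a single map. -/
def rTimeMap {Z : Type*} (D : Z → Z → ℝ) (F : Z → Z) (ε : ℝ) (z : Z) : ℕ :=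
  sInf {n : ℕ | 0 < n ∧ ChainFromMap D F ε z z n}

/-- `r_ε(F)` for a single map. -/
def rTimeMapSup {Z : Type*} (D : Z → Z → ℝ) (F : Z → Z) (ε : ℝ) : ℕ :=
  sSup (Set.range fun z : Z => rTimeMap D F ε z)

/-- `m_ε(z, δ, F)` for a single map. -/
def mTimeMap {Z : Type*} (D : Z → Z → ℝ) (F : Z → Z) (ε δ : ℝ) (z : Z) : ℕ :=
  sInf {N : ℕ | ∀ n : ℕ, N ≤ n → ∀ y : Z, ∃ z' : Z, D z' z < δ ∧ ChainFromMap D F ε z' y n}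

/-- `m_ε(δ, F)` for a single map. -/
def mTimeMapSup {Z : Type*} (D : Z → Z → ℝ) (F : Z → Z) (ε δ : ℝ) : ℕ :=
  sSup (Set.range fun z : Z => mTimeMap D F ε δ z)

/-- `N_δ(X)`: the smallest number of sets of diameter at most `δ` that cover `X`. -/
def coverNum (X : Type*) [MetricSpace X] (δ : ℝ) : ℕ :=
  sInf {k : ℕ | ∃ S : Finset (Set X),
    (∀ s ∈ S, Metric.diam s ≤ δ) ∧ (⋃ s ∈ S, s) = Set.univ ∧ S.card = k}

/-- The upper box dimension of `X`. -/
def upperBoxDim (X : Type*) [MetricSpace X] : ℝ :=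
  Filter.limsup (fun δ : ℝ => Real.log (coverNum X δ : ℝ) / (-Real.log δ))
    (nhdsWithin 0 (Set.Ioi 0))

/-- The lower box dimension of `X`. -/
def lowerBoxDim (X : Type*) [MetricSpace X] : ℝ :=
  Filter.liminf (fun δ : ℝ => Real.log (coverNum X δ : ℝ) / (-Real.log δ))
    (nhdsWithin 0 (Set.Ioi 0))

end

/-!
In a connected space, a transitive relation that holds between all sufficiently close points
holds everywhere. If every point has a `δ`-loop, then for `ε > δ` nearby points are joined
by `ε`-chains (perturb the first or last step of a loop), so chain recurrence gives chain
transitivity. Running the same argument with chain lengths restricted to multiples of the gcd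
`d` of the loop lengths at a point `x` joins `x` to the endpoint of any step out of `x` by a
chain of length divisible by `d`, which forces `d = 1`; the loop lengths at `x` then contain all
large integers, and compactness makes the resulting chain mixing uniform. Conversely, by uniform
continuity a fine chain of length `k` stays close to the true orbit along its word, so chain
mixing of `G` (at lengths `kN`) gives chain transitivity of `G^k`.
-/

open Topology

section Chains

variable {X : Type*} [MetricSpace X] {ι : Type*} {f : ι → X → X} {δ ε : ℝ} {a b c : X}
  {n n' : ℕ}

theorem ChainFrom.mono (h : ChainFrom f δ a b n) (hδ : δ ≤ ε) : ChainFrom f ε a b n := by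
  obtain ⟨w, hw, c, hc, h₀, hn⟩ := h
  exact ⟨w, hw, c, fun j hj => (hc j hj).trans hδ, h₀, hn⟩

theorem ChainFrom.trans (h₁ : ChainFrom f δ a b n) (h₂ : ChainFrom f δ b c n') :
    ChainFrom f δ a c (n + n') := by
  obtain ⟨w₁, rfl, c₁, hc₁, rfl, rfl⟩ := h₁
  obtain ⟨w₂, rfl, c₂, hc₂, h₀, rfl⟩ := h₂
  refine ⟨w₁ ++ w₂, List.length_append,
    fun j => if j ≤ w₁.length then c₁ j else c₂ (j - w₁.length), fun j hj => ?_, by simp,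
    by by_cases h : w₂ = [] <;> simp [h, h₀]⟩
  rcases lt_or_ge j w₁.length with hj₁ | hj₁
  · simpa [List.getElem_append_left hj₁, hj₁.le, Nat.succ_le_of_lt hj₁] using hc₁ j hj₁
  · have := hc₂ (j - w₁.length) (by rw [List.length_append] at hj; omega)
    rcases hj₁.eq_or_lt with hj₁ | hj₁
    · subst hj₁; simpa [h₀] using this
    · simpa [List.getElem_append_right hj₁.le, Nat.not_le.mpr hj₁,
        show ¬ j + 1 ≤ w₁.length by omega, show j + 1 - w₁.length = j - w₁.length + 1 by omega]
        using this

theorem ChainFrom.exists_of_add (h : ChainFrom f δ a c (n + n')) :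
    ∃ b, ChainFrom f δ a b n ∧ ChainFrom f δ b c n' := by
  obtain ⟨w, hw, c, hc, rfl, rfl⟩ := h
  refine ⟨c n, ⟨w.take n, by rw [List.length_take]; omega, c, fun j hj => ?_, rfl, rfl⟩,
    ⟨w.drop n, by rw [List.length_drop]; omega, fun j => c (n + j), fun j hj => ?_, rfl, rfl⟩⟩
  · rw [List.length_take] at hj
    simpa using hc j (by omega)
  · rw [List.length_drop] at hj
    simpa [Nat.add_assoc] using hc (n + j) (by omega)

theorem chainFrom_one_iff : ChainFrom f δ a b 1 ↔ ∃ i, dist (f i a) b ≤ δ := by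
  constructor
  · rintro ⟨w, hw, c, hc, rfl, rfl⟩
    exact ⟨w[0], hc 0 (by omega)⟩
  · rintro ⟨i, hi⟩
    exact ⟨[i], rfl, fun j => if j = 0 then a else b, fun j hj => by
      obtain rfl : j = 0 := by simpa using hj
      simpa using hi, rfl, rfl⟩

theorem chainFrom_zero_iff : ChainFrom f δ a b 0 ↔ a = b := by
  constructor
  · rintro ⟨w, -, c, -, rfl, rfl⟩
    rfl
  · rintro rfl
    exact ⟨[], rfl, fun _ => a, fun j hj => absurd hj (Nat.not_lt_zero j), rfl, rfl⟩

theorem ChainFrom.of_comp {κ : Type*} {φ : κ → ι} (h : ChainFrom (fun j => f (φ j)) δ a b n) :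
    ChainFrom f δ a b n := by
  obtain ⟨w, rfl, c, hc, h₀, hn⟩ := h
  exact ⟨w.map φ, List.length_map _, c, fun j hj => by simpa using hc j (by simpa using hj),
    h₀, hn⟩

theorem ChainFrom.of_blocks {κ : Type*} {g : κ → X → X} {k : ℕ}
    (hblock : ∀ a b, ChainFrom f δ a b k → ChainFrom g ε a b 1) :
    ∀ {N : ℕ} {b : X}, ChainFrom f δ a b (k * N) → ChainFrom g ε a b N
  | 0, _, h => chainFrom_zero_iff.2 (chainFrom_zero_iff.1 h)
  | N + 1, _, h => by
    obtain ⟨z, haz, hzb⟩ := (Nat.mul_succ k N ▸ h).exists_of_add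
    exact (haz.of_blocks hblock).trans (hblock z _ hzb)

theorem RelEps.trans {d : ℕ} (h₁ : RelEps f ε d a b) (h₂ : RelEps f ε d b c) :
    RelEps f ε d a c := by
  obtain ⟨n, hn, hdn, hab⟩ := h₁
  obtain ⟨n', -, hdn', hbc⟩ := h₂
  exact ⟨n + n', by omega, dvd_add hdn hdn', hab.trans hbc⟩

theorem add_mem_Tset {x : X} {s t : ℕ} (hs : s ∈ Tset f ε x) (ht : t ∈ Tset f ε x) :
    s + t ∈ Tset f ε x :=
  ⟨by have := hs.1; omega, hs.2.trans ht.2⟩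

end Chains

section Topology

variable {X : Type*} [MetricSpace X] {ι : Type*} {f : ι → X → X} {δ ε : ℝ} {a b : X} {n : ℕ}

theorem ChainFrom.eventually_start (hf : ∀ i, Continuous (f i)) (h : ChainFrom f δ a b n)
    (hn : 0 < n) (hδ : δ < ε) : ∀ᶠ a' in 𝓝 a, ChainFrom f ε a' b n := by
  obtain ⟨n, rfl⟩ : ∃ k, n = 1 + k := ⟨n - 1, by omega⟩
  obtain ⟨z, haz, hzb⟩ := h.exists_of_add
  obtain ⟨i, hi⟩ := chainFrom_one_iff.1 haz
  filter_upwards [(hf i).continuousAt.eventually (Metric.ball_mem_nhds _ (sub_pos.2 hδ))]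
    with a' ha'
  refine (chainFrom_one_iff.2 ⟨i, ?_⟩).trans (hzb.mono hδ.le)
  linarith [dist_triangle (f i a') (f i a) z, Metric.mem_ball.1 ha']

theorem ChainFrom.eventually_end (h : ChainFrom f δ a b n) (hn : 0 < n) (hδ : δ < ε) :
    ∀ᶠ b' in 𝓝 b, ChainFrom f ε a b' n := by
  obtain ⟨n, rfl⟩ : ∃ k, n = k + 1 := ⟨n - 1, by omega⟩
  obtain ⟨z, haz, hzb⟩ := h.exists_of_add
  obtain ⟨i, hi⟩ := chainFrom_one_iff.1 hzb
  filter_upwards [Metric.ball_mem_nhds b (sub_pos.2 hδ)] with b' hb'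
  refine (haz.mono hδ.le).trans (chainFrom_one_iff.2 ⟨i, ?_⟩)
  linarith [dist_triangle (f i z) b b', Metric.mem_ball'.1 hb']

theorem relEps_of_forall_relEps_self [PreconnectedSpace X] (hf : ∀ i, Continuous (f i))
    (hδ : δ < ε) {d : ℕ} (hloop : ∀ z, RelEps f δ d z z) (a b : X) : RelEps f ε d a b := by
  refine PreconnectedSpace.induction₂' _ (fun z => ?_) ⟨fun _ _ _ => RelEps.trans⟩ a b
  obtain ⟨n, hn, hdn, hz⟩ := hloop z
  filter_upwards [hz.eventually_end hn hδ, hz.eventually_start hf hn hδ] with y hzy hyz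
  exact ⟨⟨n, hn, hdn, hzy⟩, ⟨n, hn, hdn, hyz⟩⟩

end Topology

theorem Nat.exists_forall_ge_mem_of_add_mem {s : Set ℕ} (hadd : ∀ a ∈ s, ∀ b ∈ s, a + b ∈ s)
    (hgcd : Nat.setGcd s = 1) : ∃ N, ∀ n ≥ N, n ∈ s := by
  have hclosure : ∀ n ∈ AddSubmonoid.closure s, n = 0 ∨ n ∈ s := fun n hn => by
    induction hn using AddSubmonoid.closure_induction with
    | mem n hn => exact .inr hn
    | zero => exact .inl rfl
    | add a b _ _ ha hb =>
      rcases ha with rfl | ha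
      · simpa using hb
      rcases hb with rfl | hb
      · exact .inr (by simpa using ha)
      exact .inr (hadd a ha b hb)
  obtain ⟨N, hN⟩ := Nat.exists_mem_closure_of_ge s
  exact ⟨N + 1, fun n hn =>
    (hclosure n (hN n (by omega) (hgcd ▸ one_dvd n))).resolve_left (by omega)⟩

theorem exists_forall_exists_le_of_eventually {Z : Type*} [TopologicalSpace Z] [CompactSpace Z]
    {P : Z → ℕ → Prop} (h : ∀ z, ∃ n, ∀ᶠ y in 𝓝 z, P y n) : ∃ N, ∀ z, ∃ n ≤ N, P z n := by
  choose n hn using h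
  obtain ⟨t, -, ht⟩ := isCompact_univ.elim_nhds_subcover (fun z => {y | P y (n z)})
    fun z _ => hn z
  refine ⟨t.sup n, fun y => ?_⟩
  obtain ⟨z, hz, hy⟩ := Set.mem_iUnion₂.1 (ht (Set.mem_univ y))
  exact ⟨n z, Finset.le_sup hz, hy⟩

section ChainTransitive

variable {X : Type*} [MetricSpace X] {ι : Type*} {f : ι → X → X} {ε : ℝ}

theorem ChainRecurrent.chainTransitive [PreconnectedSpace X] (hf : ∀ i, Continuous (f i))
    (h : ChainRecurrent f) : ChainTransitive f := by
  intro ε hε a b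
  have hloop (z : X) : RelEps f (ε / 2) 1 z z :=
    let ⟨n, hn, hz⟩ := h z _ (half_pos hε)
    ⟨n, hn, one_dvd n, hz⟩
  obtain ⟨n, hn, -, hab⟩ := relEps_of_forall_relEps_self hf (half_lt_self hε) hloop a b
  exact ⟨n, hn, hab⟩

theorem ChainTransitive.dvd_of_mem_Tset (h : ChainTransitive f) (hε : 0 < ε) {x y : X} {d t : ℕ}
    (hd : ∀ s ∈ Tset f ε x, d ∣ s) (ht : t ∈ Tset f ε y) : d ∣ t := by
  obtain ⟨p, hp, hxy⟩ := h ε hε x y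
  obtain ⟨q, -, hyx⟩ := h ε hε y x
  have h₁ : d ∣ p + q := hd _ ⟨by omega, hxy.trans hyx⟩
  have h₂ : d ∣ p + (t + q) := hd _ ⟨by omega, hxy.trans (ht.2.trans hyx)⟩
  rw [Nat.add_left_comm] at h₂
  exact (Nat.dvd_add_left h₁).1 h₂

theorem ChainTransitive.setGcd_Tset_eq_one [PreconnectedSpace X] (hf : ∀ i, Continuous (f i))
    (h : ChainTransitive f) (hε : 0 < ε) (x : X) : Nat.setGcd (Tset f ε x) = 1 := by
  set d := Nat.setGcd (Tset f ε x)
  have hd (t : ℕ) (ht : t ∈ Tset f ε x) : d ∣ t := Nat.setGcd_dvd_of_mem ht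
  have hloop (z : X) : RelEps f (ε / 2) d z z := by
    obtain ⟨n, hn, hz⟩ := h _ (half_pos hε) z z
    exact ⟨n, hn, h.dvd_of_mem_Tset hε hd ⟨hn, hz.mono (half_le_self hε.le)⟩, hz⟩
  -- Split a loop at `x` after its first step `x → y`; the lengths `1 + k` and `n₁ + k`, with
  -- `d ∣ n₁`, are both loop lengths at `x`.
  obtain ⟨n, hn, hx⟩ := h ε hε x x
  obtain ⟨k, rfl⟩ : ∃ k, n = 1 + k := ⟨n - 1, by omega⟩
  obtain ⟨y, hxy, hyx⟩ := hx.exists_of_add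
  obtain ⟨n₁, hn₁, hdn₁, hxy'⟩ := relEps_of_forall_relEps_self hf (half_lt_self hε) hloop x y
  have hdk : d ∣ k := (Nat.dvd_add_right hdn₁).1 (hd _ ⟨by omega, hxy'.trans hyx⟩)
  exact Nat.dvd_one.1 ((Nat.dvd_add_left hdk).1 (hd _ ⟨hn, hxy.trans hyx⟩))

theorem ChainTransitive.exists_forall_ge_mem_Tset [PreconnectedSpace X]
    (hf : ∀ i, Continuous (f i)) (h : ChainTransitive f) (hε : 0 < ε) (x : X) :
    ∃ N, ∀ n ≥ N, n ∈ Tset f ε x :=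
  Nat.exists_forall_ge_mem_of_add_mem (fun _ ha _ hb => add_mem_Tset ha hb)
    (h.setGcd_Tset_eq_one hf hε x)

-- A chain `a → x₀ → ⋯ → x₀ → b` through a fixed base point, with the loop at `x₀` taking up
-- the slack in the length.
theorem ChainTransitive.chainMixing [CompactSpace X] [ConnectedSpace X]
    (hf : ∀ i, Continuous (f i)) (h : ChainTransitive f) : ChainMixing f := by
  intro ε hε
  obtain ⟨x₀⟩ : Nonempty X := inferInstance
  obtain ⟨P, hP⟩ := exists_forall_exists_le_of_eventually (P := fun a p => ChainFrom f ε a x₀ p)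
    fun a => by
      obtain ⟨p, hp, hax⟩ := h _ (half_pos hε) a x₀
      exact ⟨p, hax.eventually_start hf hp (half_lt_self hε)⟩
  obtain ⟨Q, hQ⟩ := exists_forall_exists_le_of_eventually (P := fun b q => ChainFrom f ε x₀ b q)
    fun b => by
      obtain ⟨q, hq, hxb⟩ := h _ (half_pos hε) x₀ b
      exact ⟨q, hxb.eventually_end hq (half_lt_self hε)⟩
  obtain ⟨N, hN⟩ := h.exists_forall_ge_mem_Tset hf hε x₀
  refine ⟨P + N + Q + 1, by omega, fun a b n hn => ?_⟩
  obtain ⟨p, hpP, hax⟩ := hP a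
  obtain ⟨q, hqQ, hxb⟩ := hQ b
  have hloop := (hN (n - p - q) (by omega)).2
  convert hax.trans (hloop.trans hxb) using 1
  omega

end ChainTransitive

section Powers

variable {X : Type*} {ι : Type*} {f : ι → X → X}

theorem powerGens_zero (u : Fin 0 → ι) (x : X) : powerGens f 0 u x = x := rfl

theorem powerGens_cons {k : ℕ} (i : ι) (u : Fin k → ι) (x : X) :
    powerGens f (k + 1) (Fin.cons i u) x = f i (powerGens f k u x) := by
  simp [powerGens, applyWord, List.ofFn_succ]

theorem powerGens_one : powerGens f 1 = fun u => f (u 0) := by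
  ext u x
  simp [powerGens, applyWord, List.ofFn_succ]

variable [MetricSpace X]

theorem ChainTransitive.of_powerGens_one (h : ChainTransitive (powerGens f 1)) :
    ChainTransitive f := fun ε hε a b =>
  let ⟨n, hn, hab⟩ := h ε hε a b
  ⟨n, hn, ChainFrom.of_comp (φ := fun u : Fin 1 → ι => u 0) (powerGens_one (f := f) ▸ hab)⟩

theorem exists_chainFrom_powerGens_one [CompactSpace X] [Finite ι]
    (hf : ∀ i, Continuous (f i)) (k : ℕ) {ε : ℝ} (hε : 0 < ε) :
    ∃ δ > 0, ∀ a b, ChainFrom f δ a b k → ChainFrom (powerGens f k) ε a b 1 := by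
  induction k generalizing ε with
  | zero =>
    refine ⟨ε, hε, fun a b hab => chainFrom_one_iff.2 ⟨Fin.elim0, ?_⟩⟩
    simpa [powerGens_zero, chainFrom_zero_iff.1 hab] using hε.le
  | succ k ih =>
    obtain ⟨η, hη, hfη⟩ := Metric.uniformEquicontinuous_iff.1
      (uniformEquicontinuous_finite.2 fun i => CompactSpace.uniformContinuous_of_continuous (hf i))
      (ε / 2) (half_pos hε)
    obtain ⟨δ, hδ, hk⟩ := ih (half_pos hη)
    refine ⟨min δ (ε / 2), lt_min hδ (half_pos hε), fun a b hab => ?_⟩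
    obtain ⟨z, haz, hzb⟩ := hab.exists_of_add
    obtain ⟨u, hu⟩ := chainFrom_one_iff.1 (hk a z (haz.mono (min_le_left _ _)))
    obtain ⟨i, hi⟩ := chainFrom_one_iff.1 (hzb.mono (min_le_right _ _))
    refine chainFrom_one_iff.2 ⟨Fin.cons i u, ?_⟩
    calc dist (powerGens f (k + 1) (Fin.cons i u) a) b
        ≤ dist (f i (powerGens f k u a)) (f i z) + dist (f i z) b := by
          rw [powerGens_cons]; exact dist_triangle _ _ _
      _ ≤ ε / 2 + ε / 2 := add_le_add (hfη _ _ (by linarith) i).le hi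
      _ = ε := add_halves ε

theorem ChainMixing.chainTransitive_powerGens [CompactSpace X] [Finite ι]
    (hf : ∀ i, Continuous (f i)) (h : ChainMixing f) {k : ℕ} (hk : 0 < k) :
    ChainTransitive (powerGens f k) := by
  intro ε hε a b
  obtain ⟨δ, hδ, hblock⟩ := exists_chainFrom_powerGens_one hf k hε
  obtain ⟨N, hN, hmix⟩ := h δ hδ
  exact ⟨N, hN, ChainFrom.of_blocks hblock (hmix a b _ (Nat.le_mul_of_pos_left N hk))⟩

end Powers

theorem stmt16 {X : Type*} [MetricSpace X] [CompactSpace X] [ConnectedSpace X] {m : ℕ}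
    (f : Fin m → X → X) (hf : ∀ i, Continuous (f i)) :
    List.TFAE [ChainRecurrent f, ChainTransitive f,
      ∀ k : ℕ, 0 < k → ChainTransitive (powerGens f k), ChainMixing f] := by
  tfae_have 1 → 2 := ChainRecurrent.chainTransitive hf
  tfae_have 2 → 1 := fun h x ε hε => h ε hε x x
  tfae_have 2 → 4 := ChainTransitive.chainMixing hf
  tfae_have 4 → 3 := fun h _ hk => h.chainTransitive_powerGens hf hk
  tfae_have 3 → 2 := fun h => ChainTransitive.of_powerGens_one (h 1 one_pos)
  tfae_finish
end

section
/- If the free semigroup action G on X is chain transitive, then for every ε > 0 the ε-chain recurrence times satisfy r_ε(G) ≤ r_ε(F), where F is the associated skew-product transformation; and if G is chain mixing, then for all 0 < ε < δ the chain mixing times satisfy m_ε(δ,G) ≤ m_ε(δ,F). -/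
open Metric Filter Set
open scoped Classical

/-! Every `ε`-chain of the skew product `F` projects to an `ε`-chain of `G` of the same length
(the first symbol of each point is the letter applied), so `r_ε(x, G) ≤ r_ε((ω, x), F)` and
`m_ε(x, δ, G) ≤ m_ε((ω, x), δ, F)`. What remains is that the times of `F` are bounded, as `sSup`
of an unbounded subset of `ℕ` is `0`. A `G`-chain along a word `w` lifts to an `F`-chain from the
sequence `w ++ t` to any prescribed `t`; since sequences sharing their first `L` symbols are
`ε`-close, starting `w` with `L` true steps along `ω` makes the lift start `ε`-close to `(ω, x)`.
The rest of `w` comes from chain mixing, or for returns from chain transitivity, whose chain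
lengths are uniformly bounded by compactness. -/

section ChainAlong

variable {X : Type*} [MetricSpace X] {ι : Type*} {f : ι → X → X} {δ : ℝ}

def ChainAlong (f : ι → X → X) (δ : ℝ) (w : List ι) (a b : X) : Prop :=
  ∃ c : ℕ → X, IsChainSeq f w δ c ∧ c 0 = a ∧ c w.length = b

theorem chainFrom_iff_exists_chainAlong {a b : X} {n : ℕ} :
    ChainFrom f δ a b n ↔ ∃ w : List ι, w.length = n ∧ ChainAlong f δ w a b := by
  constructor <;> rintro ⟨w, rfl, hw⟩ <;> exact ⟨w, rfl, hw⟩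

theorem ChainAlong.mono {δ' : ℝ} {w : List ι} {a b : X} (h : ChainAlong f δ w a b)
    (hδ : δ ≤ δ') : ChainAlong f δ' w a b :=
  let ⟨c, hc, h0, hn⟩ := h
  ⟨c, fun j hj => (hc j hj).trans hδ, h0, hn⟩

@[simp]
theorem chainAlong_nil {a b : X} : ChainAlong f δ [] a b ↔ a = b :=
  ⟨fun ⟨_, _, h0, hn⟩ => h0.symm.trans hn,
    fun h => ⟨fun _ => b, fun _ hj => absurd hj (Nat.not_lt_zero _), h.symm, rfl⟩⟩

theorem chainAlong_cons {i : ι} {w : List ι} {a b : X} :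
    ChainAlong f δ (i :: w) a b ↔ ∃ a', dist (f i a) a' ≤ δ ∧ ChainAlong f δ w a' b := by
  constructor
  · rintro ⟨c, hc, rfl, hb⟩
    exact ⟨c 1, hc 0 (by simp), fun j => c (j + 1),
      fun j hj => hc (j + 1) (by simpa using hj), rfl, hb⟩
  · rintro ⟨a', ha', c, hc, rfl, hb⟩
    refine ⟨fun j => Nat.casesOn j a c, ?_, rfl, hb⟩
    rintro (_ | j) hj
    · exact ha'
    · exact hc j (by simpa using hj)

theorem chainAlong_append {u v : List ι} {a b : X} :
    ChainAlong f δ (u ++ v) a b ↔ ∃ c, ChainAlong f δ u a c ∧ ChainAlong f δ v c b := by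
  induction u generalizing a with
  | nil => simp
  | cons i u ih =>
    simp only [List.cons_append, chainAlong_cons, ih]
    exact ⟨fun ⟨a', h, c, hu, hv⟩ => ⟨c, ⟨a', h, hu⟩, hv⟩,
      fun ⟨c, ⟨a', h, hu⟩, hv⟩ => ⟨a', h, c, hu, hv⟩⟩

theorem exists_chainAlong (hδ : 0 ≤ δ) (w : List ι) (a : X) : ∃ b, ChainAlong f δ w a b := by
  induction w generalizing a with
  | nil => exact ⟨a, chainAlong_nil.2 rfl⟩
  | cons i w ih =>
    obtain ⟨b, hb⟩ := ih (f i a)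
    exact ⟨b, chainAlong_cons.2 ⟨f i a, by simpa using hδ, hb⟩⟩

theorem ChainAlong.perturb_source {w : List ι} {p q a : X} {α : ℝ} (h : ChainAlong f δ w p q)
    (hw : w ≠ []) (ha : ∀ i, dist (f i a) (f i p) ≤ α) : ChainAlong f (α + δ) w a q := by
  obtain ⟨i, w, rfl⟩ := List.exists_cons_of_ne_nil hw
  obtain ⟨p', hp', hw⟩ := chainAlong_cons.1 h
  exact chainAlong_cons.2 ⟨p', (dist_triangle _ _ _).trans (add_le_add (ha i) hp'),
    hw.mono (le_add_of_nonneg_left (dist_nonneg.trans (ha i)))⟩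

theorem ChainAlong.perturb_target {w : List ι} {p q b : X} {β : ℝ} (h : ChainAlong f δ w p q)
    (hw : w ≠ []) (hb : dist q b ≤ β) : ChainAlong f (δ + β) w p b := by
  obtain ⟨u, i, rfl⟩ := (List.eq_nil_or_concat' w).resolve_left hw
  obtain ⟨r, hu, hi⟩ := chainAlong_append.1 h
  obtain ⟨q', hq', rfl⟩ := by simpa only [chainAlong_cons, chainAlong_nil] using hi
  exact chainAlong_append.2 ⟨r, hu.mono (le_add_of_nonneg_right (dist_nonneg.trans hb)),
    chainAlong_cons.2 ⟨b, (dist_triangle _ _ _).trans (add_le_add hq' hb), chainAlong_nil.2 rfl⟩⟩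

theorem ChainTransitive.exists_forall_chainFrom_le [CompactSpace X] [Finite ι]
    (hf : ∀ i, Continuous (f i)) (hct : ChainTransitive f) (hδ : 0 < δ) :
    ∃ N, ∀ a b : X, ∃ n ≤ N, ChainFrom f δ a b n := by
  have hδ3 : 0 < δ / 3 := by positivity
  obtain ⟨η, hη, hfη⟩ := uniformEquicontinuous_iff.1 (uniformEquicontinuous_finite.2
    fun i => CompactSpace.uniformContinuous_of_continuous (hf i)) (δ / 3) hδ3
  choose n hn hchain using fun p : X × X => hct (δ / 3) hδ3 p.1 p.2
  obtain ⟨t, ht⟩ := finite_cover_nhds (U := fun p : X × X => ball p.1 η ×ˢ ball p.2 (δ / 3))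
    fun p => prod_mem_nhds (ball_mem_nhds _ hη) (ball_mem_nhds _ hδ3)
  refine ⟨t.sup n, fun a b => ?_⟩
  obtain ⟨p, hp, ha, hb⟩ := mem_iUnion₂.1 (ht.ge (mem_univ (a, b)))
  obtain ⟨w, hw, hc⟩ := chainFrom_iff_exists_chainAlong.1 (hchain p)
  have hw0 : w ≠ [] := List.ne_nil_of_length_pos (hw ▸ hn p)
  have hab := (hc.perturb_source hw0 fun i => (hfη a p.1 ha i).le).perturb_target hw0
    (mem_ball'.1 hb).le
  exact ⟨n p, Finset.le_sup hp, chainFrom_iff_exists_chainAlong.2 ⟨w, hw, hab.mono (by linarith)⟩⟩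

end ChainAlong

section PseudoOrbit

variable {Z : Type*} {D : Z → Z → ℝ} {F : Z → Z} {δ : ℝ} {a b : Z}

theorem chainFromMap_zero_iff : ChainFromMap D F δ a b 0 ↔ a = b :=
  ⟨fun ⟨_, _, h0, hn⟩ => h0.symm.trans hn,
    fun h => ⟨fun _ => b, fun _ hj => absurd hj (Nat.not_lt_zero _), h.symm, rfl⟩⟩

theorem chainFromMap_succ_iff {n : ℕ} :
    ChainFromMap D F δ a b (n + 1) ↔ ∃ a', D (F a) a' ≤ δ ∧ ChainFromMap D F δ a' b n := by
  constructor
  · rintro ⟨c, hc, rfl, hb⟩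
    exact ⟨c 1, hc 0 n.succ_pos, fun j => c (j + 1),
      fun j hj => hc (j + 1) (by omega), rfl, hb⟩
  · rintro ⟨a', ha', c, hc, rfl, hb⟩
    refine ⟨fun j => Nat.casesOn j a c, ?_, rfl, hb⟩
    rintro (_ | j) hj
    · exact ha'
    · exact hc j (by omega)

theorem rTimeMap_le {n : ℕ} (hn : 0 < n) (h : ChainFromMap D F δ a a n) : rTimeMap D F δ a ≤ n :=
  Nat.sInf_le ⟨hn, h⟩

end PseudoOrbit

section SkewProduct

variable {X : Type*} [MetricSpace X] {m : ℕ} {f : Fin m → X → X} {ε : ℝ}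

theorem sigmaDist_self (ω : ℕ → Fin m) : sigmaDist m ω ω = 0 := by
  simp [sigmaDist]

theorem exists_forall_sigmaDist_le (hε : 0 < ε) :
    ∃ L, ∀ ω ω' : ℕ → Fin m, (∀ i < L, ω i = ω' i) → sigmaDist m ω ω' ≤ ε := by
  rcases le_or_gt m 1 with hm | hm
  · have : Subsingleton (Fin m) := Fin.subsingleton_iff_le_one.2 hm
    exact ⟨0, fun ω ω' _ => by rw [Subsingleton.elim ω ω', sigmaDist_self]; exact hε.le⟩
  obtain ⟨L, hL⟩ := exists_pow_lt_of_lt_one hε (by norm_num : (1 / 2 : ℝ) < 1)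
  refine ⟨L, fun ω ω' h => ?_⟩
  unfold sigmaDist
  split_ifs with hne
  · have hLk : L ≤ Nat.find hne := (Nat.le_find_iff hne L).2 fun i hi => not_not.2 (h i hi)
    have hm2 : (2 : ℝ) ≤ m := by exact_mod_cast hm
    calc (1 / (m : ℝ)) ^ Nat.find hne ≤ (1 / 2) ^ Nat.find hne :=
          pow_le_pow_left₀ (by positivity) (one_div_le_one_div_of_le two_pos hm2) _
      _ ≤ (1 / 2) ^ L := pow_le_pow_of_le_one (by norm_num) (by norm_num) hLk
      _ ≤ ε := hL.le
  · exact hε.le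

theorem chainFrom_of_chainFromMap_skew {z z' : (ℕ → Fin m) × X} {n : ℕ}
    (h : ChainFromMap (skewDist m) (skewMap f) ε z z' n) : ChainFrom f ε z.2 z'.2 n := by
  induction n generalizing z with
  | zero =>
    obtain rfl := chainFromMap_zero_iff.1 h
    exact chainFrom_iff_exists_chainAlong.2 ⟨[], rfl, chainAlong_nil.2 rfl⟩
  | succ n ih =>
    obtain ⟨z₁, hz₁, h⟩ := chainFromMap_succ_iff.1 h
    obtain ⟨w, rfl, hw⟩ := chainFrom_iff_exists_chainAlong.1 (ih h)
    exact chainFrom_iff_exists_chainAlong.2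
      ⟨z.1 0 :: w, rfl, chainAlong_cons.2 ⟨z₁.2, (le_max_right _ _).trans hz₁, hw⟩⟩

theorem ChainAlong.chainFromMap_skew {w : List (Fin m)} {x y : X} (h : ChainAlong f ε w x y)
    (t : ℕ → Fin m) :
    ChainFromMap (skewDist m) (skewMap f) ε (w ++ₛ t, x) (t, y) w.length := by
  induction w generalizing x with
  | nil => exact chainFromMap_zero_iff.2 (by rw [chainAlong_nil.1 h]; rfl)
  | cons i w ih =>
    obtain ⟨x₁, hx₁, h⟩ := chainAlong_cons.1 h
    refine chainFromMap_succ_iff.2 ⟨(w ++ₛ t, x₁), max_le ?_ hx₁, ih h⟩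
    exact (sigmaDist_self _).trans_le (dist_nonneg.trans hx₁)

theorem exists_chainFromMap_skew_return_le [CompactSpace X] (hf : ∀ i, Continuous (f i))
    (hct : ChainTransitive f) (hε : 0 < ε) :
    ∃ B, ∀ z, ∃ n, 0 < n ∧ n ≤ B ∧ ChainFromMap (skewDist m) (skewMap f) ε z z n := by
  obtain ⟨L, hL⟩ := exists_forall_sigmaDist_le (m := m) hε
  obtain ⟨N, hN⟩ := hct.exists_forall_chainFrom_le hf hε
  refine ⟨L + N + 1, fun ⟨ω, x⟩ => ?_⟩
  let u := List.ofFn fun j : Fin L => ω (j + 1)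
  obtain ⟨p, hu⟩ := exists_chainAlong hε.le u (f (ω 0) x)
  obtain ⟨k, hkN, hpx⟩ := hN p x
  obtain ⟨v, rfl, hv⟩ := chainFrom_iff_exists_chainAlong.1 hpx
  have hlift := (chainAlong_append.2 ⟨p, hu, hv⟩).chainFromMap_skew ω
  refine ⟨(u ++ v).length + 1, Nat.succ_pos _, by simp [u]; omega,
    chainFromMap_succ_iff.2 ⟨(u ++ v ++ₛ ω, f (ω 0) x),
      max_le (hL _ _ fun i hi => ?_) ((dist_self _).trans_le hε.le), hlift⟩⟩
  have hi' : i < (u ++ v).length := by simp [u]; omega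
  calc ω (i + 1) = (u ++ v)[i] := by simp [u, List.getElem_append_left, hi]
    _ = _ := (Stream'.get_append_left i (u ++ v) ω hi').symm

theorem exists_chainFromMap_skew_mixing_le {δ : ℝ} (hcm : ChainMixing f) (hε : 0 < ε)
    (hεδ : ε < δ) : ∃ B, ∀ z, ∀ n, B ≤ n → ∀ y, ∃ z',
      skewDist m z' z < δ ∧ ChainFromMap (skewDist m) (skewMap f) ε z' y n := by
  obtain ⟨L, hL⟩ := exists_forall_sigmaDist_le (m := m) hε
  obtain ⟨N, -, hN⟩ := hcm ε hε
  refine ⟨L + N, fun ⟨ω, x⟩ n hn ⟨t, y⟩ => ?_⟩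
  let u := List.ofFn fun j : Fin L => ω j
  obtain ⟨p, hu⟩ := exists_chainAlong hε.le u x
  obtain ⟨v, hv, hpy⟩ := chainFrom_iff_exists_chainAlong.1 (hN p y (n - L) (by omega))
  have hlift := (chainAlong_append.2 ⟨p, hu, hpy⟩).chainFromMap_skew t
  rw [List.length_append, hv, show u.length = L by simp [u], Nat.add_sub_cancel' (by omega)]
    at hlift
  refine ⟨_, ?_, hlift⟩
  show max _ (dist x x) < δ
  rw [dist_self]
  refine max_lt ((hL _ _ fun i hi => ?_).trans_lt hεδ) (hε.trans hεδ)
  have hi' : i < (u ++ v).length := by simp [u]; omega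
  exact (Stream'.get_append_left i (u ++ v) t hi').trans (by simp [u, List.getElem_append_left, hi])

theorem rTime_le_rTimeMap_skew {ω : ℕ → Fin m} {x : X}
    (h : ∃ n, 0 < n ∧ ChainFromMap (skewDist m) (skewMap f) ε (ω, x) (ω, x) n) :
    rTime f ε x ≤ rTimeMap (skewDist m) (skewMap f) ε (ω, x) :=
  csInf_le_csInf (OrderBot.bddBelow _) h fun _ hn => ⟨hn.1, chainFrom_of_chainFromMap_skew hn.2⟩

theorem mTime_le_mTimeMap_skew {δ : ℝ} {ω : ℕ → Fin m} {x : X}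
    (h : ∃ N, ∀ n, N ≤ n → ∀ y, ∃ z',
      skewDist m z' (ω, x) < δ ∧ ChainFromMap (skewDist m) (skewMap f) ε z' y n) :
    mTime f ε δ x ≤ mTimeMap (skewDist m) (skewMap f) ε δ (ω, x) :=
  csInf_le_csInf (OrderBot.bddBelow _) h fun _ hN n hn y =>
    let ⟨z', hz', hc⟩ := hN n hn (ω, y)
    ⟨z'.2, (le_max_right _ _).trans_lt hz', chainFrom_of_chainFromMap_skew hc⟩

end SkewProduct

theorem stmt17 {X : Type*} [MetricSpace X] [CompactSpace X] {m : ℕ} (hm : 0 < m)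
    (f : Fin m → X → X) (hf : ∀ i, Continuous (f i)) :
    (ChainTransitive f → ∀ ε : ℝ, 0 < ε →
      rTimeSup f ε ≤ rTimeMapSup (skewDist (X := X) m) (skewMap f) ε) ∧
      (ChainMixing f → ∀ ε δ : ℝ, 0 < ε → ε < δ →
        mTimeSup f ε δ ≤ mTimeMapSup (skewDist (X := X) m) (skewMap f) ε δ) := by
  let ω₀ : ℕ → Fin m := fun _ => ⟨0, hm⟩
  refine ⟨fun hct ε hε => ?_, fun hcm ε δ hε hεδ => ?_⟩
  · obtain ⟨B, hB⟩ := exists_chainFromMap_skew_return_le hf hct hε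
    have hbdd : BddAbove (range fun z => rTimeMap (skewDist m) (skewMap f) ε z) := by
      refine ⟨B, ?_⟩
      rintro _ ⟨z, rfl⟩
      obtain ⟨n, hn, hnB, hz⟩ := hB z
      exact (rTimeMap_le hn hz).trans hnB
    refine ciSup_mono_of_forall_exists' hbdd fun x => ⟨(ω₀, x), rTime_le_rTimeMap_skew ?_⟩
    obtain ⟨n, hn, -, hz⟩ := hB (ω₀, x)
    exact ⟨n, hn, hz⟩
  · obtain ⟨B, hB⟩ := exists_chainFromMap_skew_mixing_le hcm hε hεδ
    have hbdd : BddAbove (range fun z => mTimeMap (skewDist m) (skewMap f) ε δ z) := by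
      refine ⟨B, ?_⟩
      rintro _ ⟨z, rfl⟩
      exact Nat.sInf_le (hB z)
    exact ciSup_mono_of_forall_exists' hbdd fun x =>
      ⟨(ω₀, x), mTime_le_mTimeMap_skew ⟨B, hB _⟩⟩
end

section
/- Let G be a chain transitive free semigroup action on a compact metric space X. If for every ε > 0 the greatest common divisor of the set T_ε(x) of lengths of (w,ε)-chains from x to itself equals 1 (for some, equivalently every, x ∈ X), then G is chain mixing. -/
open Metric Filter Set
open scoped Classical

/-! By compactness, chains from any `a` to a base point `z` and from `z` to any `b` can be taken of
uniformly bounded length: one step from `a` lands near a point of a finite net, and the last point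
of a chain ending at a net point near `b` can be moved to `b`. The lengths of `ε`-loops at `z` form
an additive semigroup of gcd one, hence contain every large integer (Frobenius); inserting such a
loop at `z` yields chains from `a` to `b` of every large length. -/

section ChainMixing

variable {X : Type*} [MetricSpace X] {ι : Type*} {f : ι → X → X}

theorem ChainFrom.append {δ : ℝ} {a b c : X} {n k : ℕ} (h₁ : ChainFrom f δ a b n)
    (h₂ : ChainFrom f δ b c k) : ChainFrom f δ a c (n + k) := by
  obtain ⟨w₁, rfl, c₁, hc₁, h₁0, h₁n⟩ := h₁
  obtain ⟨w₂, rfl, c₂, hc₂, h₂0, h₂k⟩ := h₂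
  set n := w₁.length
  have hjoin : c₂ 0 = c₁ n := h₂0.trans h₁n.symm
  refine ⟨w₁ ++ w₂, List.length_append, fun j => if j < n then c₁ j else c₂ (j - n),
    fun j hj => ?_, ?_, by simp [h₂k]⟩
  · dsimp only
    simp only [List.get_eq_getElem]
    by_cases hj₁ : j < n
    · rw [List.getElem_append_left hj₁, if_pos hj₁]
      have hnext : (if j + 1 < n then c₁ (j + 1) else c₂ (j + 1 - n)) = c₁ (j + 1) := by
        split_ifs with h
        · rfl
        · rw [show j + 1 = n by omega, Nat.sub_self, hjoin]
      rw [hnext]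
      exact hc₁ j hj₁
    · have hj₂ : j - n < w₂.length := by simp only [List.length_append] at hj; omega
      rw [List.getElem_append_right (by omega), if_neg hj₁, if_neg (by omega),
        show j + 1 - n = j - n + 1 by omega]
      exact hc₂ (j - n) hj₂
  · dsimp only
    split_ifs with h
    · exact h₁0
    · rw [Nat.zero_sub, hjoin, show n = 0 by omega, h₁0]

theorem chainFrom_one {δ : ℝ} {a b : X} (i : ι) (h : dist (f i a) b ≤ δ) : ChainFrom f δ a b 1 :=
  ⟨[i], rfl, fun j => if j = 0 then a else b, fun j hj => by
    obtain rfl : j = 0 := by simpa using hj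
    simpa using h, rfl, rfl⟩

theorem ChainFrom.nonempty_of_pos {δ : ℝ} {a b : X} {n : ℕ} (h : ChainFrom f δ a b n)
    (hn : 0 < n) : Nonempty ι := by
  obtain ⟨w, rfl, -⟩ := h
  exact ⟨w.get ⟨0, hn⟩⟩

theorem ChainFrom.replace_last {δ δ' : ℝ} {a q b : X} {n : ℕ} (h : ChainFrom f δ a q n)
    (hn : 0 < n) (hqb : dist q b ≤ δ') : ChainFrom f (δ + δ') a b n := by
  obtain ⟨w, rfl, c, hc, h0, hq⟩ := h
  have hδ' : 0 ≤ δ' := dist_nonneg.trans hqb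
  refine ⟨w, rfl, Function.update c w.length b, fun j hj => ?_, ?_, by simp⟩
  · rw [Function.update_of_ne hj.ne]
    by_cases hj' : j + 1 = w.length
    · rw [hj', Function.update_self]
      calc dist (f (w.get ⟨j, hj⟩) (c j)) b
          ≤ dist (f (w.get ⟨j, hj⟩) (c j)) (c (j + 1)) + dist (c (j + 1)) b := dist_triangle _ _ _
        _ ≤ δ + δ' := add_le_add (hc j hj) (by rwa [hj', hq])
    · rw [Function.update_of_ne hj']
      linarith [hc j hj]
  · rwa [Function.update_of_ne hn.ne]

theorem add_mem_Tset_s18 {ε : ℝ} {x : X} {a b : ℕ} (ha : a ∈ Tset f ε x) (hb : b ∈ Tset f ε x) :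
    a + b ∈ Tset f ε x :=
  ⟨Nat.add_pos_left ha.1 b, ha.2.append hb.2⟩

theorem exists_finset_forall_exists_dist_lt [CompactSpace X] {r : ℝ} (hr : 0 < r) :
    ∃ s : Finset X, ∀ x : X, ∃ q ∈ s, dist x q < r := by
  obtain ⟨s, -, hs⟩ :=
    isCompact_univ.elim_nhds_subcover (fun q : X => ball q r) fun q _ => ball_mem_nhds q hr
  exact ⟨s, fun x => by simpa using hs (mem_univ x)⟩

theorem ChainTransitive.exists_chainFrom_to_le [CompactSpace X] (hct : ChainTransitive f)
    {ε : ℝ} (hε : 0 < ε) (z : X) : ∃ A, ∀ a : X, ∃ k ≤ A, ChainFrom f ε a z k := by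
  obtain ⟨s, hs⟩ := exists_finset_forall_exists_dist_lt (X := X) hε
  choose N hNpos hN using fun q => hct ε hε q z
  have : Nonempty ι := (hN z).nonempty_of_pos (hNpos z)
  refine ⟨1 + s.sup N, fun a => ?_⟩
  obtain ⟨q, hq, hfa⟩ := hs (f (Classical.arbitrary ι) a)
  exact ⟨1 + N q, Nat.add_le_add_left (Finset.le_sup hq) 1,
    (chainFrom_one _ hfa.le).append (hN q)⟩

theorem ChainTransitive.exists_chainFrom_from_le [CompactSpace X] (hct : ChainTransitive f)
    {ε : ℝ} (hε : 0 < ε) (z : X) : ∃ B, ∀ b : X, ∃ k ≤ B, ChainFrom f ε z b k := by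
  obtain ⟨s, hs⟩ := exists_finset_forall_exists_dist_lt (X := X) (half_pos hε)
  choose N hNpos hN using fun q => hct (ε / 2) (half_pos hε) z q
  refine ⟨s.sup N, fun b => ?_⟩
  obtain ⟨q, hq, hbq⟩ := hs b
  refine ⟨N q, Finset.le_sup hq, ?_⟩
  rw [← add_halves ε]
  exact (hN q).replace_last (hNpos q) (dist_comm b q ▸ hbq.le)

theorem ChainTransitive.chainMixing_of_eventually_mem_Tset [CompactSpace X]
    (hct : ChainTransitive f) (hloop : ∀ ε > 0, ∀ z : X, ∀ᶠ n in atTop, n ∈ Tset f ε z) :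
    ChainMixing f := by
  intro ε hε
  rcases isEmpty_or_nonempty X with _ | ⟨⟨z⟩⟩
  · exact ⟨1, one_pos, fun a => isEmptyElim a⟩
  obtain ⟨A, hA⟩ := hct.exists_chainFrom_to_le hε z
  obtain ⟨B, hB⟩ := hct.exists_chainFrom_from_le hε z
  obtain ⟨N, hN⟩ := eventually_atTop.mp (hloop ε hε z)
  refine ⟨A + N + B + 1, by omega, fun a b n hn => ?_⟩
  obtain ⟨k₁, hk₁, hto⟩ := hA a
  obtain ⟨k₂, hk₂, hfrom⟩ := hB b
  have hz := (hN (n - k₁ - k₂) (by omega)).2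
  rw [show n = k₁ + (n - k₁ - k₂) + k₂ by omega]
  exact (hto.append hz).append hfrom

end ChainMixing

theorem eventually_mem_of_add_mem_of_isGCDOf_one {T : Set ℕ}
    (hT : ∀ a ∈ T, ∀ b ∈ T, a + b ∈ T) (hgcd : IsGCDOf T 1) : ∀ᶠ n in atTop, n ∈ T := by
  have hT1 : Nat.setGcd T = 1 := Nat.dvd_one.mp (hgcd.2 _ fun _ => Nat.setGcd_dvd_of_mem)
  have hclosure : ∀ n ∈ AddSubmonoid.closure T, n = 0 ∨ n ∈ T := fun n hn => by
    induction hn using AddSubmonoid.closure_induction with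
    | mem x hx => exact Or.inr hx
    | zero => exact Or.inl rfl
    | add x y _ _ hx hy =>
      rcases hx with rfl | hx
      · simpa using hy
      rcases hy with rfl | hy
      · exact Or.inr hx
      · exact Or.inr (hT x hx y hy)
  obtain ⟨N, hN⟩ := Nat.exists_mem_closure_of_ge T
  exact eventually_atTop.mpr ⟨N + 1, fun n hn =>
    (hclosure n (hN n (by omega) (hT1 ▸ one_dvd n))).resolve_left (by omega)⟩

theorem stmt18_general {X : Type*} [MetricSpace X] [CompactSpace X] {m : ℕ}
    (f : Fin m → X → X) (hct : ChainTransitive f)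
    (hgcd : ∀ ε : ℝ, 0 < ε → ∀ x : X, IsGCDOf (Tset f ε x) 1) :
    ChainMixing f :=
  hct.chainMixing_of_eventually_mem_Tset fun ε hε z =>
    eventually_mem_of_add_mem_of_isGCDOf_one (fun _ ha _ hb => add_mem_Tset_s18 ha hb) (hgcd ε hε z)

theorem stmt18 {X : Type*} [MetricSpace X] [CompactSpace X] {m : ℕ}
    (f : Fin m → X → X) (hf : ∀ i, Continuous (f i)) (hct : ChainTransitive f)
    (hgcd : ∀ ε : ℝ, 0 < ε → ∀ x : X, IsGCDOf (Tset f ε x) 1) :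
    ChainMixing f :=
  stmt18_general f hct hgcd
end

section
/- Let G be a chain transitive free semigroup action on a compact metric space X, let ε > 0, and let k_ε = gcd(T_ε(x)) (independent of x). Then the equivalence relation ∼_ε partitions X into exactly k_ε clopen equivalence classes [x_0], [x_1], …, [x_{k_ε−1}], which are cyclically permuted by G in the sense that [f_j(x_i)] = [x_{(i+1) mod k_ε}] for every generator f_j (0 ≤ j ≤ m−1) and every i, and each class is invariant under G^{k_ε}, i.e. f_w([x_i]) ⊆ [x_i] for every w ∈ F_m^+ with |w| = k_ε. -/
open Metric Filter Set
open scoped Classical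

section auxlemmas
variable {X : Type*} [MetricSpace X] {ι : Type*} {f : ι → X → X} {δ : ℝ}

lemma chainFrom_zero (a : X) : ChainFrom f δ a a 0 :=
  ⟨[], rfl, fun _ => a, fun j h => by simp at h, rfl, rfl⟩

lemma chainFrom_cons {a b c : X} {n : ℕ} (i : ι) (h : dist (f i a) b ≤ δ)
    (hc : ChainFrom f δ b c n) : ChainFrom f δ a c (n + 1) := by
  obtain ⟨w, hw, s, hs, h0, he⟩ := hc
  refine ⟨i :: w, by simp [hw], fun j => match j with | 0 => a | t+1 => s t, ?_, rfl, he⟩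
  intro j hj
  match j with
  | 0 => simpa [h0] using h
  | t + 1 =>
    have ht : t < w.length := by simpa using hj
    simpa using hs t ht

lemma chainFrom_head {a c : X} {n : ℕ} (hc : ChainFrom f δ a c (n + 1)) :
    ∃ i b, dist (f i a) b ≤ δ ∧ ChainFrom f δ b c n := by
  obtain ⟨w, hw, s, hs, h0, he⟩ := hc
  cases w with
  | nil => simp at hw
  | cons i w =>
    have hwl : w.length = n := by simpa using hw
    refine ⟨i, s 1, ?_, w, hwl, fun j => s (j + 1), ?_, rfl, he⟩
    · have := hs 0 (by simp)
      simpa [h0] using this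
    · intro j hj
      have hj' : j + 1 < (i :: w).length := by simp; omega
      have := hs (j + 1) hj'
      simpa using this

lemma chainFrom_trans {a b c : X} {n n' : ℕ} (h1 : ChainFrom f δ a b n)
    (h2 : ChainFrom f δ b c n') : ChainFrom f δ a c (n + n') := by
  induction n generalizing a with
  | zero =>
    obtain ⟨w, hw, s, hs, h0, he⟩ := h1
    have hab : a = b := by rw [← h0, he]
    simpa [hab] using h2
  | succ n ih =>
    obtain ⟨i, b', hd, hc⟩ := chainFrom_head h1
    have := chainFrom_cons i hd (ih hc)
    have he : n + 1 + n' = n + n' + 1 := by omega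
    rwa [he]

lemma chainFrom_orbit (hδ : 0 ≤ δ) (w : List ι) (x : X) :
    ChainFrom f δ x (applyWord f w x) w.length := by
  induction w with
  | nil => exact chainFrom_zero x
  | cons i w ih =>
    have step : ChainFrom f δ (applyWord f w x) (f i (applyWord f w x)) 1 :=
      chainFrom_cons i (by simpa using hδ) (chainFrom_zero _)
    simpa [applyWord] using chainFrom_trans ih step

end auxlemmas


theorem stmt19 {X : Type*} [MetricSpace X] [CompactSpace X] [Nonempty X] {m : ℕ}
    (f : Fin m → X → X) (hf : ∀ i, Continuous (f i)) (hct : ChainTransitive f)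
    (ε : ℝ) (hε : 0 < ε) (k : ℕ) (hk : 0 < k)
    (hgcd : ∀ x : X, IsGCDOf (Tset f ε x) k) :
    ∃ p : Fin k → X,
      (∀ i j : Fin k, RelEps f ε k (p i) (p j) → i = j) ∧
        (∀ x : X, ∃ i : Fin k, RelEps f ε k (p i) x) ∧
        (∀ i : Fin k, IsClopen {y : X | RelEps f ε k (p i) y}) ∧
        (∀ (j : Fin m) (i : Fin k),
          {y : X | RelEps f ε k (f j (p i)) y} =
            {y : X | RelEps f ε k (p ⟨((i : ℕ) + 1) % k, Nat.mod_lt _ hk⟩) y}) ∧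
        (∀ w : List (Fin m), w.length = k → ∀ i : Fin k, ∀ x : X,
          RelEps f ε k (p i) x → RelEps f ε k (p i) (applyWord f w x)) := by
  classical
  set x₀ : X := Classical.arbitrary X with hx₀
  obtain ⟨n₀, hn₀, hc₀⟩ := hct ε hε x₀ x₀
  have hm : 0 < m := by
    by_contra h
    push_neg at h
    obtain ⟨w, hw, -⟩ := hc₀
    cases w with
    | nil => simp at hw; omega
    | cons i w => exact absurd i.isLt (by omega)
  have hdvd : ∀ (x : X) (n : ℕ), 0 < n → ChainFrom f ε x x n → k ∣ n :=
    fun x n hn hc => (hgcd x).1 n ⟨hn, hc⟩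
  have hex : ∀ y : X, ∃ a, ChainFrom f ε x₀ y a := fun y => by
    obtain ⟨n, -, hc⟩ := hct ε hε x₀ y; exact ⟨n, hc⟩
  have hmod : ∀ (y : X) (a b : ℕ), ChainFrom f ε x₀ y a → ChainFrom f ε x₀ y b →
      a ≡ b [MOD k] := by
    intro y a b ha hb
    obtain ⟨m', hm', hc'⟩ := hct ε hε y x₀
    have d1 : k ∣ a + m' := hdvd x₀ _ (by omega) (chainFrom_trans ha hc')
    have d2 : k ∣ b + m' := hdvd x₀ _ (by omega) (chainFrom_trans hb hc')
    have h1 : a + m' ≡ b + m' [MOD k] :=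
      (Nat.modEq_zero_iff_dvd.2 d1).trans (Nat.modEq_zero_iff_dvd.2 d2).symm
    exact h1.add_right_cancel' m'
  have rel_iff : ∀ (x y : X) (a b : ℕ), ChainFrom f ε x₀ x a → ChainFrom f ε x₀ y b →
      (RelEps f ε k x y ↔ a ≡ b [MOD k]) := by
    intro x y a b ha hb
    constructor
    · rintro ⟨n, hn, hkn, hc⟩
      have h1 : a + n ≡ b [MOD k] := hmod y _ _ (chainFrom_trans ha hc) hb
      have h2 : a ≡ a + n [MOD k] := (Nat.modEq_iff_dvd' (Nat.le_add_right a n)).2 (by simpa)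
      exact h2.trans h1
    · intro hab
      obtain ⟨m', hm', hcx⟩ := hct ε hε x x₀
      have d1 : k ∣ a + m' := hdvd x₀ _ (by omega) (chainFrom_trans ha hcx)
      refine ⟨m' + b, by omega, ?_, chainFrom_trans hcx hb⟩
      have h1 : a + m' ≡ 0 [MOD k] := Nat.modEq_zero_iff_dvd.2 d1
      have h2 : b + m' ≡ a + m' [MOD k] := hab.symm.add_right m'
      have h3 : b + m' ≡ 0 [MOD k] := h2.trans h1
      have h4 := Nat.modEq_zero_iff_dvd.1 h3
      simpa [Nat.add_comm] using h4
  have relTrans : ∀ {x y z : X}, RelEps f ε k x y → RelEps f ε k y z → RelEps f ε k x z := by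
    rintro x y z ⟨n, hn, hkn, hc⟩ ⟨n', hn', hkn', hc'⟩
    exact ⟨n + n', by omega, Nat.dvd_add hkn hkn', chainFrom_trans hc hc'⟩
  have relSymm : ∀ {x y : X}, RelEps f ε k x y → RelEps f ε k y x := by
    rintro x y ⟨n, hn, hkn, hc⟩
    obtain ⟨m', hm', hc'⟩ := hct ε hε y x
    have hd : k ∣ n + m' := hdvd x _ (by omega) (chainFrom_trans hc hc')
    exact ⟨m', hm', (Nat.dvd_add_right hkn).1 hd, hc'⟩
  set p : Fin k → X := fun i => applyWord f (List.replicate (i : ℕ) (⟨0, hm⟩ : Fin m)) x₀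
    with hpdef
  have hp0 : ∀ i : Fin k, ChainFrom f ε x₀ (p i) (i : ℕ) := fun i => by
    rw [hpdef]
    simpa using chainFrom_orbit hε.le (List.replicate (i : ℕ) (⟨0, hm⟩ : Fin m)) x₀
  have hdistinct : ∀ i j : Fin k, RelEps f ε k (p i) (p j) → i = j := by
    intro i j hr
    have h1 := (rel_iff _ _ _ _ (hp0 i) (hp0 j)).1 hr
    have hi := Nat.mod_eq_of_lt i.isLt
    have hj := Nat.mod_eq_of_lt j.isLt
    unfold Nat.ModEq at h1
    exact Fin.ext (by omega)
  have hcover : ∀ x : X, ∃ i : Fin k, RelEps f ε k (p i) x := by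
    intro x
    obtain ⟨a, ha⟩ := hex x
    refine ⟨⟨a % k, Nat.mod_lt _ hk⟩, ?_⟩
    exact (rel_iff _ _ _ _ (hp0 ⟨a % k, Nat.mod_lt _ hk⟩) ha).2
      (by simpa using Nat.mod_modEq a k)
  have hopen : ∀ i : Fin k, IsOpen {y : X | RelEps f ε k (p i) y} := by
    intro i
    rw [Metric.isOpen_iff]
    intro y hy
    obtain ⟨δ', hδ', hδ'c⟩ :=
      Metric.continuousAt_iff.1 (hf ⟨0, hm⟩).continuousAt ε hε
    refine ⟨δ', hδ', fun y' hy' => ?_⟩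
    obtain ⟨a', ha'⟩ := hex y'
    obtain ⟨b, hb⟩ := hex y
    obtain ⟨m', hm', hmc⟩ := hct ε hε (f ⟨0, hm⟩ y) x₀
    have st1 : ChainFrom f ε y' (f ⟨0, hm⟩ y) 1 :=
      chainFrom_cons _ (le_of_lt (hδ'c (Metric.mem_ball.1 hy'))) (chainFrom_zero _)
    have st2 : ChainFrom f ε y (f ⟨0, hm⟩ y) 1 :=
      chainFrom_cons (⟨0, hm⟩ : Fin m) (by simpa using hε.le) (chainFrom_zero _)
    have d1 : k ∣ a' + 1 + m' := hdvd x₀ _ (by omega)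
      (chainFrom_trans (chainFrom_trans ha' st1) hmc)
    have d2 : k ∣ b + 1 + m' := hdvd x₀ _ (by omega)
      (chainFrom_trans (chainFrom_trans hb st2) hmc)
    have hab : a' ≡ b [MOD k] := by
      have e1 : k ∣ a' + (1 + m') := by rw [← Nat.add_assoc]; exact d1
      have e2 : k ∣ b + (1 + m') := by rw [← Nat.add_assoc]; exact d2
      have h1 : a' + (1 + m') ≡ b + (1 + m') [MOD k] :=
        (Nat.modEq_zero_iff_dvd.2 e1).trans (Nat.modEq_zero_iff_dvd.2 e2).symm
      exact h1.add_right_cancel' _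
    have hib : (i : ℕ) ≡ b [MOD k] := (rel_iff _ _ _ _ (hp0 i) hb).1 hy
    exact (rel_iff _ _ _ _ (hp0 i) ha').2 (hib.trans hab.symm)
  refine ⟨p, hdistinct, hcover, ?_, ?_, ?_⟩
  · intro i
    refine ⟨?_, hopen i⟩
    rw [← isOpen_compl_iff]
    have hcompl : {y : X | RelEps f ε k (p i) y}ᶜ =
        ⋃ j : Fin k, ⋃ (_ : j ≠ i), {y : X | RelEps f ε k (p j) y} := by
      ext y
      simp only [Set.mem_compl_iff, Set.mem_setOf_eq, Set.mem_iUnion]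
      constructor
      · intro hni
        obtain ⟨j, hj⟩ := hcover y
        refine ⟨j, ?_, hj⟩
        rintro rfl; exact hni hj
      · rintro ⟨j, hji, hj⟩ hi
        exact hji (hdistinct j i (relTrans hj (relSymm hi)))
    rw [hcompl]
    exact isOpen_iUnion fun j => isOpen_iUnion fun _ => hopen j
  · intro j i
    have key : RelEps f ε k (f j (p i)) (p ⟨((i : ℕ) + 1) % k, Nat.mod_lt _ hk⟩) := by
      have hstep : ChainFrom f ε x₀ (f j (p i)) ((i : ℕ) + 1) :=
        chainFrom_trans (hp0 i) (chainFrom_cons j (by simpa using hε.le) (chainFrom_zero _))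
      exact (rel_iff _ _ _ _ hstep (hp0 _)).2
        (by simpa using (Nat.mod_modEq ((i : ℕ) + 1) k).symm)
    ext y
    simp only [Set.mem_setOf_eq]
    exact ⟨fun h => relTrans (relSymm key) h, fun h => relTrans key h⟩
  · intro w hw i x hrel
    have hc : ChainFrom f ε x (applyWord f w x) k := hw ▸ chainFrom_orbit hε.le w x
    exact relTrans hrel ⟨k, hk, dvd_refl k, hc⟩
end
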